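/- arXiv:1707.06816 — 2 statements merged into one kernel-verified Lean document; each statement's English description precedes it below -/
import Mathlib

section
/- Every element g of the pro-p Iwahori subgroup G of SL_n(ℤ_p) admits a unique triangular decomposition g = X·Z·Y, where X is lower unipotent with entries in p·ℤ_p below the diagonal, Z is diagonal in G with diagonal entries ≡ 1 mod p of determinant 1, and Y is upper unipotent with entries in ℤ_p above the diagonal. -/
/-!
Split off the first row and column. If the corner entry `a` of `g` is a unit, then
`g = [1 0; c/a 1] · diag(a, S) · [1 r/a; 0 1]`, where `S = M - c r / a` is the Schur complement,
and conversely a factorisation `X · diagonal d · Y` with unitriangular `X`, `Y` and unit `d 0`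
is determined by the first row and column of `g` together with the factorisation of `S`.
In the pro-`p` Iwahori group `a ≡ 1` and `c ≡ 0 (mod p)`, so `a` is a unit and `S` is again in
the Iwahori group; induction on `n` gives existence and uniqueness. The condition `det Z = 1`
comes for free, since unitriangular matrices have determinant `1`.
-/

namespace Matrix

section Blocks

variable {R : Type*} {n : ℕ}

def finSuccBlocks (a : R) (r c : Fin n → R) (M : Matrix (Fin n) (Fin n) R) :
    Matrix (Fin (n + 1)) (Fin (n + 1)) R :=
  of (Fin.cons (Fin.cons a r) fun i => Fin.cons (c i) (M i))

variable (a : R) (r c : Fin n → R) (M : Matrix (Fin n) (Fin n) R)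

theorem exists_eq_finSuccBlocks (N : Matrix (Fin (n + 1)) (Fin (n + 1)) R) :
    ∃ a r c M, N = finSuccBlocks a r c M :=
  ⟨N 0 0, fun j => N 0 j.succ, fun i => N i.succ 0, N.submatrix Fin.succ Fin.succ, by
    ext i j; cases i using Fin.cases <;> cases j using Fin.cases <;> rfl⟩

theorem finSuccBlocks_inj {a' : R} {r' c' : Fin n → R} {M' : Matrix (Fin n) (Fin n) R} :
    finSuccBlocks a r c M = finSuccBlocks a' r' c' M' ↔ a = a' ∧ r = r' ∧ c = c' ∧ M = M' := by
  refine ⟨fun h => ⟨congr_fun₂ h 0 0, funext fun j => congr_fun₂ h 0 j.succ,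
    funext fun i => congr_fun₂ h i.succ 0, funext₂ fun i j => congr_fun₂ h i.succ j.succ⟩, ?_⟩
  rintro ⟨rfl, rfl, rfl, rfl⟩
  rfl

theorem transpose_finSuccBlocks : (finSuccBlocks a r c M)ᵀ = finSuccBlocks a c r Mᵀ := by
  ext i j; cases i using Fin.cases <;> cases j using Fin.cases <;> rfl

theorem diagonal_cons_eq_finSuccBlocks [Zero R] (d : Fin n → R) :
    diagonal (Fin.cons a d : Fin (n + 1) → R) = finSuccBlocks a 0 0 (diagonal d) := by
  ext i j
  cases i using Fin.cases <;> cases j using Fin.cases <;>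
    simp [finSuccBlocks, diagonal_apply, (Fin.succ_ne_zero _).symm]

theorem finSuccBlocks_mul [NonUnitalCommSemiring R] (a' : R) (r' c' : Fin n → R)
    (M' : Matrix (Fin n) (Fin n) R) :
    finSuccBlocks a r c M * finSuccBlocks a' r' c' M' =
      finSuccBlocks (a * a' + r ⬝ᵥ c') (a • r' + r ᵥ* M') (a' • c + M *ᵥ c')
        (vecMulVec c r' + M * M') := by
  ext i j
  cases i using Fin.cases <;> cases j using Fin.cases <;>
    simp [finSuccBlocks, mul_apply, Fin.sum_univ_succ, dotProduct, vecMul, mulVec, vecMulVec,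
      mul_comm]

theorem finSuccBlocks_mul_diagonal_mul [CommSemiring R] (X D Y : Matrix (Fin n) (Fin n) R) :
    finSuccBlocks 1 0 c X * finSuccBlocks a 0 0 D * finSuccBlocks 1 r 0 Y =
      finSuccBlocks a (a • r) (a • c) (a • vecMulVec c r + X * D * Y) := by
  simp [finSuccBlocks_mul, smul_vecMulVec]

end Blocks

section Unitriangular

variable {ι R : Type*} [LT ι]

def IsLowerUnitriangular [Zero R] [One R] (M : Matrix ι ι R) : Prop :=
  M.IsLowerTriangular ∧ ∀ i, M i i = 1

def IsUpperUnitriangular [Zero R] [One R] (M : Matrix ι ι R) : Prop :=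
  M.IsUpperTriangular ∧ ∀ i, M i i = 1

def IsUpperTriangularMod [Semiring R] (I : Ideal R) (M : Matrix ι ι R) : Prop :=
  ∀ i j, j < i → M i j ∈ I

theorem isLowerUnitriangular_transpose_iff [Zero R] [One R] {M : Matrix ι ι R} :
    IsLowerUnitriangular Mᵀ ↔ IsUpperUnitriangular M :=
  and_congr_left' Matrix.blockTriangular_transpose_iff

end Unitriangular

section FinSucc

variable {R : Type*} {n : ℕ} (a : R) (r c : Fin n → R) (M : Matrix (Fin n) (Fin n) R)

theorem isLowerUnitriangular_finSuccBlocks_iff [Zero R] [One R] :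
    IsLowerUnitriangular (finSuccBlocks a r c M) ↔ a = 1 ∧ r = 0 ∧ IsLowerUnitriangular M := by
  simp [IsLowerUnitriangular, BlockTriangular, Fin.forall_fin_succ, funext_iff, finSuccBlocks,
    and_assoc, and_left_comm, OrderDual.lt_toDual, Fin.succ_pos]

theorem isUpperUnitriangular_finSuccBlocks_iff [Zero R] [One R] :
    IsUpperUnitriangular (finSuccBlocks a r c M) ↔ a = 1 ∧ c = 0 ∧ IsUpperUnitriangular M := by
  rw [← isLowerUnitriangular_transpose_iff, transpose_finSuccBlocks,
    isLowerUnitriangular_finSuccBlocks_iff, isLowerUnitriangular_transpose_iff]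

theorem isUpperTriangularMod_finSuccBlocks_iff [Semiring R] (I : Ideal R) :
    IsUpperTriangularMod I (finSuccBlocks a r c M) ↔
      (∀ i, c i ∈ I) ∧ IsUpperTriangularMod I M := by
  simp [IsUpperTriangularMod, finSuccBlocks, Fin.forall_fin_succ, Fin.succ_pos, forall_and]

theorem IsLowerUnitriangular.exists_eq_finSuccBlocks [Zero R] [One R]
    {X : Matrix (Fin (n + 1)) (Fin (n + 1)) R} (hX : IsLowerUnitriangular X) :
    ∃ c X₁, IsLowerUnitriangular X₁ ∧ X = finSuccBlocks 1 0 c X₁ := by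
  obtain ⟨a, r, c, X₁, rfl⟩ := Matrix.exists_eq_finSuccBlocks X
  obtain ⟨rfl, rfl, hX₁⟩ := (isLowerUnitriangular_finSuccBlocks_iff ..).1 hX
  exact ⟨c, X₁, hX₁, rfl⟩

theorem IsUpperUnitriangular.exists_eq_finSuccBlocks [Zero R] [One R]
    {Y : Matrix (Fin (n + 1)) (Fin (n + 1)) R} (hY : IsUpperUnitriangular Y) :
    ∃ r Y₁, IsUpperUnitriangular Y₁ ∧ Y = finSuccBlocks 1 r 0 Y₁ := by
  obtain ⟨a, r, c, Y₁, rfl⟩ := Matrix.exists_eq_finSuccBlocks Y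
  obtain ⟨rfl, rfl, hY₁⟩ := (isUpperUnitriangular_finSuccBlocks_iff ..).1 hY
  exact ⟨r, Y₁, hY₁, rfl⟩

end FinSucc

section LDU

variable {R : Type*} [CommRing R]

theorem IsLowerUnitriangular.det_eq_one {ι : Type*} [Fintype ι] [LinearOrder ι] [DecidableEq ι]
    {X : Matrix ι ι R} (hX : IsLowerUnitriangular X) : X.det = 1 := by
  simp [det_of_isLowerTriangular X hX.1, hX.2]

theorem IsUpperUnitriangular.det_eq_one {ι : Type*} [Fintype ι] [LinearOrder ι] [DecidableEq ι]
    {Y : Matrix ι ι R} (hY : IsUpperUnitriangular Y) : Y.det = 1 := by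
  simp [det_of_isUpperTriangular hY.1, hY.2]

theorem eq_of_ldu_eq {n : ℕ} {X X' Y Y' : Matrix (Fin n) (Fin n) R} {d d' : Fin n → R}
    (hX : IsLowerUnitriangular X) (hX' : IsLowerUnitriangular X')
    (hY : IsUpperUnitriangular Y) (hY' : IsUpperUnitriangular Y') (hd : ∀ i, IsUnit (d i))
    (h : X * diagonal d * Y = X' * diagonal d' * Y') : X = X' ∧ d = d' ∧ Y = Y' := by
  induction n with
  | zero => exact ⟨Subsingleton.elim _ _, Subsingleton.elim _ _, Subsingleton.elim _ _⟩
  | succ n ih =>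
    obtain ⟨c, X₁, hX₁, rfl⟩ := hX.exists_eq_finSuccBlocks
    obtain ⟨c', X₁', hX₁', rfl⟩ := hX'.exists_eq_finSuccBlocks
    obtain ⟨r, Y₁, hY₁, rfl⟩ := hY.exists_eq_finSuccBlocks
    obtain ⟨r', Y₁', hY₁', rfl⟩ := hY'.exists_eq_finSuccBlocks
    rw [← Fin.cons_self_tail d, ← Fin.cons_self_tail d'] at h ⊢
    rw [diagonal_cons_eq_finSuccBlocks, diagonal_cons_eq_finSuccBlocks,
      finSuccBlocks_mul_diagonal_mul, finSuccBlocks_mul_diagonal_mul, finSuccBlocks_inj] at h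
    obtain ⟨ha, hr, hc, hM⟩ := h
    rw [← ha] at hr hc hM
    obtain rfl := (hd 0).smul_left_cancel.1 hr
    obtain rfl := (hd 0).smul_left_cancel.1 hc
    obtain ⟨rfl, htail, rfl⟩ := ih hX₁ hX₁' hY₁ hY₁' (fun i => hd i.succ) (add_left_cancel hM)
    exact ⟨rfl, by rw [ha]; exact congrArg _ htail, rfl⟩

theorem exists_ldu_of_isUpperTriangularMod {I : Ideal R} (hI : I ≤ Ideal.jacobson ⊥) {n : ℕ}
    (g : Matrix (Fin n) (Fin n) R) (hlow : IsUpperTriangularMod I g)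
    (hdiag : ∀ i, g i i - 1 ∈ I) :
    ∃ X d Y, IsLowerUnitriangular X ∧ IsUpperTriangularMod I X ∧ (∀ i, d i - 1 ∈ I) ∧
      IsUpperUnitriangular Y ∧ g = X * diagonal d * Y := by
  induction n with
  | zero =>
    refine ⟨1, 1, 1, ?_⟩
    simp [IsLowerUnitriangular, IsUpperUnitriangular, IsUpperTriangularMod, blockTriangular_one,
      Subsingleton.elim g 1]
  | succ n ih =>
    obtain ⟨a, r, c, M, rfl⟩ := exists_eq_finSuccBlocks g
    obtain ⟨u, rfl⟩ : IsUnit a := Ideal.isUnit_of_sub_one_mem_jacobson_bot _ (hI (hdiag 0))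
    have hc : ∀ i, c i ∈ I := fun i => hlow i.succ 0 i.succ_pos
    set b : R := ↑u⁻¹
    set S := M - b • vecMulVec c r
    have hcr : ∀ i j, (b • vecMulVec c r) i j ∈ I := fun i j =>
      I.mul_mem_left b (I.mul_mem_right (r j) (hc i))
    obtain ⟨X₁, d₁, Y₁, hX₁, hX₁I, hd₁, hY₁, hS⟩ := ih S
      (fun i j hij => I.sub_mem (hlow i.succ j.succ (Fin.succ_lt_succ_iff.2 hij)) (hcr i j))
      (fun i => sub_right_comm (M i i) _ 1 ▸ I.sub_mem (hdiag i.succ) (hcr i i))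
    refine ⟨finSuccBlocks 1 0 (b • c) X₁, Fin.cons (u : R) d₁, finSuccBlocks 1 (b • r) 0 Y₁,
      (isLowerUnitriangular_finSuccBlocks_iff ..).2 ⟨rfl, rfl, hX₁⟩,
      (isUpperTriangularMod_finSuccBlocks_iff ..).2 ⟨fun i => I.mul_mem_left b (hc i), hX₁I⟩,
      Fin.cases (hdiag 0) hd₁, (isUpperUnitriangular_finSuccBlocks_iff ..).2 ⟨rfl, rfl, hY₁⟩, ?_⟩
    rw [diagonal_cons_eq_finSuccBlocks, finSuccBlocks_mul_diagonal_mul, ← hS]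
    simp [S, b, smul_smul, vecMulVec_smul, smul_vecMulVec]

end LDU

end Matrix

/-- Every element `g` of the pro-`p` Iwahori subgroup of `SL_n(ℤ_p)` has a unique
triangular decomposition `g = X·Z·Y` with `X` lower unipotent (below-diagonal entries in
`pℤ_p`), `Z` diagonal with entries `≡ 1 mod p` and determinant `1`, and `Y` upper
unipotent. -/
theorem iwahori_triangular_decomposition {p n : ℕ} [Fact p.Prime]
    (g : Matrix (Fin n) (Fin n) ℤ_[p]) (hdet : g.det = 1)
    (hlow : ∀ i j : Fin n, j < i → (p : ℤ_[p]) ∣ g i j)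
    (hdiag : ∀ i : Fin n, (p : ℤ_[p]) ∣ (g i i - 1)) :
    ∃! T : Matrix (Fin n) (Fin n) ℤ_[p] × Matrix (Fin n) (Fin n) ℤ_[p] ×
        Matrix (Fin n) (Fin n) ℤ_[p],
      (∀ i, T.1 i i = 1) ∧ (∀ i j : Fin n, i < j → T.1 i j = 0) ∧
      (∀ i j : Fin n, j < i → (p : ℤ_[p]) ∣ T.1 i j) ∧
      (∀ i j : Fin n, i ≠ j → T.2.1 i j = 0) ∧
      (∀ i, (p : ℤ_[p]) ∣ (T.2.1 i i - 1)) ∧ T.2.1.det = 1 ∧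
      (∀ i, T.2.2 i i = 1) ∧ (∀ i j : Fin n, j < i → T.2.2 i j = 0) ∧
      g = T.1 * T.2.1 * T.2.2 := by
  have hI : Ideal.span {(p : ℤ_[p])} ≤ Ideal.jacobson ⊥ :=
    PadicInt.maximalIdeal_eq_span_p (p := p) ▸ IsLocalRing.maximalIdeal_le_jacobson ⊥
  simp only [← Ideal.mem_span_singleton] at hlow hdiag ⊢
  obtain ⟨X, d, Y, hX, hXI, hd, hY, rfl⟩ :=
    Matrix.exists_ldu_of_isUpperTriangularMod hI g hlow hdiag
  have hdet_d : (Matrix.diagonal d).det = 1 := by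
    rwa [Matrix.det_mul, Matrix.det_mul, hX.det_eq_one, hY.det_eq_one, one_mul, mul_one] at hdet
  refine ⟨(X, Matrix.diagonal d, Y), ⟨hX.2, fun i j => @hX.1 i j, hXI,
    fun i j => Matrix.diagonal_apply_ne d, by simpa using hd, hdet_d, hY.2,
    fun i j => @hY.1 i j, rfl⟩, ?_⟩
  rintro ⟨X', Z', Y'⟩ ⟨hX'₁, hX'₂, -, hZ', -, -, hY'₁, hY'₂, h⟩
  have hZ'_diag : Matrix.diagonal Z'.diag = Z' :=
    (Matrix.isDiag_iff_diagonal_diag Z').1 fun i j => hZ' i j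
  rw [← hZ'_diag] at h
  obtain ⟨rfl, rfl, rfl⟩ := Matrix.eq_of_ldu_eq hX ⟨hX'₂, hX'₁⟩ hY ⟨hY'₂, hY'₁⟩
    (fun i => Ideal.isUnit_of_sub_one_mem_jacobson_bot _ (hI (hd i))) h
  rw [hZ'_diag]
end

section
/- Let x_{i,k} (1 ≤ k ≤ m), x_{k,j} (1 ≤ k ≤ m), and x_{i,j} be elements of ℤ_p with i, j > m, j < i. If val_p(p x_{i,j}) ≥ val_p(Σ_{k=1}^m p x_{i,k} x_{k,j}), then (j−i)/n + val_p(Σ_{k=1}^m p x_{i,k} x_{k,j} + p x_{i,j}) ≥ min_{1≤k≤m} ((k−i)/n + val_p(p x_{i,k})). -/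
/-!
Since `x_{k,j} ∈ ℤ_p`, each summand `p x_{i,k} x_{k,j}` has valuation at least `val_p(p x_{i,k})`, and
its weight `(k - i)/n` is at most `(j - i)/n` because `k ≤ m < j`. The ultrametric inequality
bounds the valuation of the sum from below by the minimum over its summands, and the hypothesis
on `val_p(p x_{i,j})` ensures that adding `p x_{i,j}` does not lower it.
-/

open scoped Classical

/-- `p`-adic valuation with values in `WithTop ℝ` (`⊤` at `0`). -/
noncomputable def valR {p : ℕ} [Fact p.Prime] (x : ℤ_[p]) : WithTop ℝ :=
  if x = 0 then ⊤ else ((x.valuation : ℝ) : WithTop ℝ)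

section valR

variable {p : ℕ} [Fact p.Prime]

theorem valR_eq_map_addValuation (x : ℤ_[p]) :
    valR x = WithTop.map (Int.cast : ℤ → ℝ) (Padic.addValuation (x : ℚ_[p])) := by
  by_cases hx : x = 0
  · simp [valR, hx]
  · rw [valR, if_neg hx, Padic.addValuation.apply (PadicInt.coe_ne_zero.2 hx),
      PadicInt.valuation_coe]
    simp

theorem valR_nonneg (x : ℤ_[p]) : 0 ≤ valR x := by
  unfold valR
  split_ifs
  · exact le_top
  · exact WithTop.coe_le_coe.2 (Nat.cast_nonneg _)

theorem valR_mul (a b : ℤ_[p]) : valR (a * b) = valR a + valR b := by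
  simp only [valR_eq_map_addValuation, PadicInt.coe_mul, AddValuation.map_mul]
  exact WithTop.map_add (Int.castAddHom ℝ) _ _

theorem valR_le_valR_mul (a b : ℤ_[p]) : valR a ≤ valR (a * b) := by
  rw [valR_mul]
  exact le_add_of_nonneg_right (valR_nonneg b)

theorem min_valR_le_valR_add (a b : ℤ_[p]) : min (valR a) (valR b) ≤ valR (a + b) := by
  have hmono : Monotone (WithTop.map (Int.cast : ℤ → ℝ)) := Int.cast_mono.withTop_map
  simp only [valR_eq_map_addValuation, PadicInt.coe_add, ← hmono.map_min]
  exact hmono (AddValuation.map_add _ _ _)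

theorem valR_le_valR_add_of_le {a b : ℤ_[p]} (h : valR a ≤ valR b) : valR a ≤ valR (a + b) :=
  min_eq_left h ▸ min_valR_le_valR_add a b

theorem le_add_valR_sum {ι : Type*} {s : Finset ι} {f : ι → ℤ_[p]} {g c : WithTop ℝ}
    (h : ∀ k ∈ s, g ≤ c + valR (f k)) : g ≤ c + valR (∑ k ∈ s, f k) := by
  refine Finset.sum_induction f (fun x => g ≤ c + valR x) (fun a b ha hb => ?_) ?_ h
  · calc g ≤ min (c + valR a) (c + valR b) := le_min ha hb
      _ = c + min (valR a) (valR b) := min_add_add_left _ _ _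
      _ ≤ c + valR (a + b) := add_le_add_right (min_valR_le_valR_add a b) c
  · simp [valR]

end valR

theorem key_valuation_inequality_general {p : ℕ} [Fact p.Prime] (n m i j : ℕ) (hj : j = m + 1)
    (u v : ℕ → ℤ_[p]) (w : ℤ_[p])
    (hyp : valR (∑ k ∈ Finset.Icc 1 m, (p : ℤ_[p]) * u k * v k) ≤ valR ((p : ℤ_[p]) * w)) :
    (Finset.Icc 1 m).inf
        (fun k => ((((k : ℝ) - (i : ℝ)) / (n : ℝ) : ℝ) : WithTop ℝ) + valR ((p : ℤ_[p]) * u k))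
      ≤ ((((j : ℝ) - (i : ℝ)) / (n : ℝ) : ℝ) : WithTop ℝ) +
          valR ((∑ k ∈ Finset.Icc 1 m, (p : ℤ_[p]) * u k * v k) + (p : ℤ_[p]) * w) := by
  have hweight : ∀ k ∈ Finset.Icc 1 m, ((k : ℝ) - i) / n ≤ ((j : ℝ) - i) / n := by
    intro k hk
    have hkj : (k : ℝ) ≤ j := by exact_mod_cast (by grind : k ≤ j)
    gcongr
  refine le_trans (le_add_valR_sum fun k hk => ?_)
    (add_le_add_right (valR_le_valR_add_of_le hyp) _)
  exact (Finset.inf_le hk).trans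
    (add_le_add (WithTop.coe_le_coe.2 (hweight k hk)) (valR_le_valR_mul _ _))

/-- Key inequality: if `val_p(p x_{i,j}) ≥ val_p(∑_{k=1}^m p x_{i,k} x_{k,j})` then
`(j−i)/n + val_p(∑_k p x_{i,k} x_{k,j} + p x_{i,j}) ≥ min_k ((k−i)/n + val_p(p x_{i,k}))`.
Here `u k = x_{i,k}`, `v k = x_{k,j}`, `w = x_{i,j}`. -/
theorem key_valuation_inequality {p : ℕ} [Fact p.Prime] (n m i j : ℕ) (hn : 2 ≤ n)
    (hm : 1 ≤ m) (hj : j = m + 1) (hji : j < i) (hin : i ≤ n)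
    (u v : ℕ → ℤ_[p]) (w : ℤ_[p])
    (hyp : valR (∑ k ∈ Finset.Icc 1 m, (p : ℤ_[p]) * u k * v k) ≤ valR ((p : ℤ_[p]) * w)) :
    (Finset.Icc 1 m).inf
        (fun k => ((((k : ℝ) - (i : ℝ)) / (n : ℝ) : ℝ) : WithTop ℝ) + valR ((p : ℤ_[p]) * u k))
      ≤ ((((j : ℝ) - (i : ℝ)) / (n : ℝ) : ℝ) : WithTop ℝ) +
          valR ((∑ k ∈ Finset.Icc 1 m, (p : ℤ_[p]) * u k * v k) + (p : ℤ_[p]) * w) :=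
  key_valuation_inequality_general n m i j hj u v w hyp
end
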